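/- Let p be an odd prime, k an integer, α an integer not divisible by p, and χ a Dirichlet character mod p with χ(−1) = (−1)^k·χ_p(−1). Suppose that for each γ ∈ ℤ/pℤ a function F_γ : ℍ → ℂ is given such that: (i) there are an integer B and coefficients c(γ,·) : ℤ → ℂ vanishing for m < −B such that F_γ(τ) = ∑_{m ∈ ℤ} c(γ,m)·e((m − αγ̃²/p)τ) for all τ ∈ ℍ, the series converging absolutely; (ii) F_{−γ} = (−1)^k·χ_p(−1)·F_γ for all γ; (iii) F_0(−1/τ) = (χ_p(α)·ε_p/√p)·τ^k·∑_{β ∈ ℤ/pℤ} F_β(τ) for all τ ∈ ℍ. If ∑_{γ ∈ (ℤ/pℤ)^×} χ(γ)·F_γ(pτ) = 0 for all τ ∈ ℍ, then F_γ is identically zero for every γ ∈ ℤ/pℤ. (This is the injectivity of the twisted component sum map φ_χ.) -/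

import Mathlib

open Complex Finset

/-- `e(x) = exp(2πix)`. -/
noncomputable def e (x : ℂ) : ℂ := Complex.exp (2 * (Real.pi : ℂ) * Complex.I * x)

/-- `ε_p = 1` if `p ≡ 1 (mod 4)` and `ε_p = i` if `p ≡ 3 (mod 4)`. -/
noncomputable def εp (p : ℕ) : ℂ := if p % 4 = 1 then 1 else Complex.I

/-! Translating `τ` by `j / p` multiplies `F_γ(pτ)` by the additive character `e(-αγ̃²j/p)`, so the
vanishing of the twisted sum at all these translates says that the discrete Fourier transform of
`t ↦ ∑_{αγ² = t} χ(γ) F_γ(pτ)` vanishes. The fibre through a unit `δ` is `{δ, -δ}`, and by the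
component symmetry and the parity of `χ` both of its terms agree, so `F_δ = 0`. Then (iii) reads
`F_0(-1/τ) = C τ^k F_0(τ)` with `‖C‖ = p^(-1/2)`; applying it twice gives
`F_0 = C² (-1)^k F_0`, forcing `F_0 = 0`. -/

open ZMod

lemma e_add (x y : ℂ) : e (x + y) = e x * e y := by
  simp [e, mul_add, Complex.exp_add]

lemma e_intCast (n : ℤ) : e n = 1 := by
  rw [e, show 2 * (Real.pi : ℂ) * I * n = n * (2 * Real.pi * I) by ring]
  exact Complex.exp_int_mul_two_pi_mul_I n

lemma e_intCast_div_natCast (j : ℤ) (N : ℕ) [NeZero N] :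
    e (j / N) = stdAddChar (j : ZMod N) := by
  rw [stdAddChar_coe, e, mul_div_assoc]

lemma apply_add_intCast_of_hasSum {c : ℤ → ℂ} {r : ℂ} {f : ℂ → ℂ}
    (hf : ∀ τ : ℂ, 0 < τ.im → HasSum (fun m : ℤ => c m * e ((m - r) * τ)) (f τ))
    {τ : ℂ} (hτ : 0 < τ.im) (j : ℤ) : f (τ + j) = e (-(r * j)) * f τ := by
  refine (hf (τ + j) (by simpa using hτ)).unique ?_
  have hterm (m : ℤ) :
      c m * e ((m - r) * (τ + j)) = e (-(r * j)) * (c m * e ((m - r) * τ)) := by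
    rw [show ((m : ℂ) - r) * (τ + j) = ((m * j : ℤ) : ℂ) + (-(r * j) + (m - r) * τ) by
      push_cast; ring, e_add, e_add, e_intCast]
    ring
  simpa only [hterm] using (hf τ hτ).mul_left (e (-(r * j)))

lemma apply_add_val_of_hasSum {p : ℕ} [NeZero p] {c : ℤ → ℂ} {α : ℤ} {γ : ZMod p} {f : ℂ → ℂ}
    (hf : ∀ τ : ℂ, 0 < τ.im →
      HasSum (fun m : ℤ => c m * e ((m - α * (γ.val : ℂ) ^ 2 / p) * τ)) (f τ))
    {τ : ℂ} (hτ : 0 < τ.im) (j : ZMod p) :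
    f (τ + j.val) = stdAddChar (-((α : ZMod p) * γ ^ 2 * j)) * f τ := by
  have h := apply_add_intCast_of_hasSum hf hτ j.val
  rw [Int.cast_natCast] at h
  rw [h, show -(α * (γ.val : ℂ) ^ 2 / p * j.val) = ((-(α * γ.val ^ 2 * j.val) : ℤ) : ℂ) / p by
    push_cast; ring, e_intCast_div_natCast]
  push_cast
  simp only [natCast_val, cast_id', id]

lemma sum_fiber_eq_zero_of_forall_sum_stdAddChar {N : ℕ} [NeZero N] {ι : Type*} [Fintype ι]
    (a : ι → ℂ) (s : ι → ZMod N)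
    (h : ∀ j : ZMod N, ∑ i, stdAddChar (-(s i * j)) * a i = 0) (t : ZMod N) :
    ∑ i with s i = t, a i = 0 := by
  classical
  set g : ZMod N → ℂ := fun t => ∑ i with s i = t, a i
  suffices 𝓕 g = 0 from congrFun ((map_eq_zero_iff _ (dft (N := N)).injective).mp this) t
  ext j
  rw [dft_apply, Pi.zero_apply, ← h j, ← Finset.sum_fiberwise univ s]
  refine Finset.sum_congr rfl fun t _ => ?_
  rw [smul_eq_mul, Finset.mul_sum]
  refine Finset.sum_congr rfl fun i hi => ?_
  rw [(Finset.mem_filter.mp hi).2]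

lemma add_apply_neg_eq_zero_of_forall_sum_stdAddChar {p : ℕ} [Fact p.Prime] (hp2 : p ≠ 2)
    {α : ZMod p} (hα : α ≠ 0) (a : (ZMod p)ˣ → ℂ)
    (h : ∀ j : ZMod p, ∑ γ : (ZMod p)ˣ, stdAddChar (-(α * (γ : ZMod p) ^ 2 * j)) * a γ = 0)
    (δ : (ZMod p)ˣ) : a δ + a (-δ) = 0 := by
  classical
  have hfiber : ({γ | α * (γ : ZMod p) ^ 2 = α * δ ^ 2} : Finset (ZMod p)ˣ) = {δ, -δ} := by
    ext γ
    simp [mul_right_inj' hα, sq_eq_sq_iff_eq_or_eq_neg, Units.ext_iff]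
  have hδ : δ ≠ -δ := fun h => ne_neg_self ((Fact.out : p.Prime).odd_of_ne_two hp2) δ.ne_zero
    (congrArg Units.val h)
  rw [← Finset.sum_pair hδ, ← hfiber]
  exact sum_fiber_eq_zero_of_forall_sum_stdAddChar a (fun γ => α * (γ : ZMod p) ^ 2) h _

lemma MulChar.apply_neg_mul_apply_neg {R : Type*} [CommRing R] (χ : MulChar R ℂ) {ε : ℂ}
    (hχ : χ (-1) = ε) {f : R → ℂ} {x : R} (hf : f (-x) = ε * f x) :
    χ (-x) * f (-x) = χ x * f x := by
  have hsq : χ (-1) * χ (-1) = 1 := by rw [← map_mul, neg_one_mul, neg_neg, map_one]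
  rw [hf, ← hχ, ← neg_one_mul x, map_mul]
  linear_combination χ x * f x * hsq

lemma apply_unit_mul_eq_zero_of_twisted_sum_eq_zero {p : ℕ} [Fact p.Prime] (hp2 : p ≠ 2)
    {α : ℤ} (hα : ¬ (p : ℤ) ∣ α) {χ : DirichletCharacter ℂ p} {ε : ℂ} (hχ : χ (-1) = ε)
    {F : ZMod p → ℂ → ℂ} {c : ZMod p → ℤ → ℂ}
    (hF : ∀ γ : ZMod p, ∀ τ : ℂ, 0 < τ.im →
      HasSum (fun m : ℤ => c γ m * e ((m - α * (γ.val : ℂ) ^ 2 / p) * τ)) (F γ τ))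
    (hsymm : ∀ γ : ZMod p, ∀ τ : ℂ, 0 < τ.im → F (-γ) τ = ε * F γ τ)
    (hzero : ∀ τ : ℂ, 0 < τ.im → ∑ γ : (ZMod p)ˣ, χ γ * F γ (p * τ) = 0)
    (δ : (ZMod p)ˣ) {τ : ℂ} (hτ : 0 < τ.im) : F δ (p * τ) = 0 := by
  have hp : (p : ℂ) ≠ 0 := NeZero.ne _
  have hpτ : 0 < ((p : ℂ) * τ).im := by simpa using mul_pos (by exact_mod_cast NeZero.pos p) hτ
  have htwist (j : ZMod p) : ∑ γ : (ZMod p)ˣ,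
      stdAddChar (-((α : ZMod p) * (γ : ZMod p) ^ 2 * j)) * (χ γ * F γ (p * τ)) = 0 := by
    have h := hzero (τ + j.val / p) (by
      rwa [add_im, div_natCast_im, natCast_im, zero_div, add_zero])
    rw [mul_add, mul_div_cancel₀ _ hp] at h
    simpa only [apply_add_val_of_hasSum (hF _) hpτ, mul_left_comm] using h
  have hpair := add_apply_neg_eq_zero_of_forall_sum_stdAddChar hp2
    (by rwa [Ne, intCast_zmod_eq_zero_iff_dvd]) _ htwist δ
  rw [Units.val_neg, χ.apply_neg_mul_apply_neg hχ (f := fun γ => F γ (p * τ)) (hsymm _ _ hpτ),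
    ← two_mul] at hpair
  simpa [(δ.isUnit.map χ).ne_zero] using hpair

lemma eq_zero_of_forall_apply_neg_one_div {C : ℂ} (hC : ‖C‖ ≠ 1) {k : ℤ} {f : ℂ → ℂ}
    (hf : ∀ τ : ℂ, 0 < τ.im → f (-1 / τ) = C * τ ^ k * f τ) {τ : ℂ} (hτ : 0 < τ.im) :
    f τ = 0 := by
  have hτ0 : τ ≠ 0 := fun h => by simp [h] at hτ
  have hSτ : 0 < (-1 / τ).im := by
    rw [neg_div, one_div, neg_im, inv_im, neg_div, neg_neg]
    exact div_pos hτ (normSq_pos.mpr hτ0)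
  have hinv : (-1 / τ) ^ k * τ ^ k = (-1) ^ k := by
    rw [← mul_zpow, div_mul_cancel₀ _ hτ0]
  have hfix : (1 - C ^ 2 * (-1) ^ k) * f τ = 0 := by
    have h := hf (-1 / τ) hSτ
    rw [show -1 / (-1 / τ) = τ by field_simp, hf τ hτ] at h
    linear_combination h + C ^ 2 * f τ * hinv
  refine (mul_eq_zero.mp hfix).resolve_left fun h => hC ?_
  have := congrArg norm (sub_eq_zero.mp h).symm
  rw [norm_mul, norm_pow, norm_zpow, norm_neg, norm_one, one_zpow, mul_one] at this
  exact (pow_eq_one_iff_of_nonneg (norm_nonneg C) two_ne_zero).mp this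

lemma norm_legendreSym_mul_εp_div_sqrt_ne_one {p : ℕ} [Fact p.Prime] {α : ℤ}
    (hα : ¬ (p : ℤ) ∣ α) : ‖(legendreSym p α : ℂ) * εp p / Real.sqrt p‖ ≠ 1 := by
  have hp : (1 : ℝ) < p := by exact_mod_cast (Fact.out : p.Prime).one_lt
  have hχ : ‖(legendreSym p α : ℂ)‖ = 1 := by
    rcases legendreSym.eq_one_or_neg_one p (a := α) (by rwa [Ne, intCast_zmod_eq_zero_iff_dvd])
      with h | h <;> simp [h]
  have hε : ‖εp p‖ = 1 := by unfold εp; split <;> simp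
  rw [norm_div, norm_mul, hχ, hε, norm_real, Real.norm_of_nonneg (Real.sqrt_nonneg _), one_mul,
    Ne, div_eq_one_iff_eq (by positivity), eq_comm, Real.sqrt_eq_one]
  exact hp.ne'

theorem twisted_component_sum_injective (p : ℕ) [Fact p.Prime] (hp2 : p ≠ 2)
    (k : ℤ) (α : ℤ) (hα : ¬ (p : ℤ) ∣ α) (χ : DirichletCharacter ℂ p)
    (hχ : χ (-1) = (-1 : ℂ) ^ k * (legendreSym p (-1) : ℂ))
    (F : ZMod p → ℂ → ℂ)
    -- (i) Fourier expansion with coefficients bounded from below, converging absolutely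
    (hFourier : ∃ B : ℤ, ∃ c : ZMod p → ℤ → ℂ,
      (∀ γ : ZMod p, ∀ m : ℤ, m < -B → c γ m = 0) ∧
      (∀ γ : ZMod p, ∀ τ : ℂ, 0 < τ.im →
        HasSum (fun m : ℤ => c γ m * e (((m : ℂ) - (α : ℂ) * (γ.val : ℂ) ^ 2 / p) * τ))
          (F γ τ)))
    -- (ii) component symmetry
    (hsymm : ∀ γ : ZMod p, ∀ τ : ℂ, 0 < τ.im →
      F (-γ) τ = (-1 : ℂ) ^ k * (legendreSym p (-1) : ℂ) * F γ τ)
    -- (iii) transformation of the zero component under S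
    (hS : ∀ τ : ℂ, 0 < τ.im →
      F 0 (-1 / τ) = ((legendreSym p α : ℂ) * εp p / Real.sqrt p) * τ ^ k *
        ∑ β : ZMod p, F β τ)
    -- vanishing of the twisted component sum
    (hzero : ∀ τ : ℂ, 0 < τ.im →
      ∑ γ : (ZMod p)ˣ, χ (γ : ZMod p) * F (γ : ZMod p) ((p : ℂ) * τ) = 0) :
    ∀ γ : ZMod p, ∀ τ : ℂ, 0 < τ.im → F γ τ = 0 := by
  obtain ⟨_, c, -, hF⟩ := hFourier
  have hne (γ : ZMod p) (hγ : γ ≠ 0) (τ : ℂ) (hτ : 0 < τ.im) : F γ τ = 0 := by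
    have hτp : 0 < (τ / p).im := by
      rw [div_natCast_im]
      exact div_pos hτ (by exact_mod_cast NeZero.pos p)
    simpa [mul_div_cancel₀ _ (NeZero.ne (p : ℂ))] using
      apply_unit_mul_eq_zero_of_twisted_sum_eq_zero hp2 hα hχ hF hsymm hzero
        (isUnit_iff_ne_zero.mpr hγ).unit hτp
  have h0 (τ : ℂ) (hτ : 0 < τ.im) : F 0 τ = 0 :=
    eq_zero_of_forall_apply_neg_one_div (norm_legendreSym_mul_εp_div_sqrt_ne_one hα)
      (fun τ hτ => by rw [hS τ hτ, Fintype.sum_eq_single 0 fun β hβ => hne β hβ τ hτ]) hτ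
  intro γ τ hτ
  rcases eq_or_ne γ 0 with rfl | hγ
  exacts [h0 τ hτ, hne γ hγ τ hτ]
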